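/- Let ρ be a two-qubit density matrix and let t be the real 3×3 matrix with entries t m n = Re(Tr(ρ · (σ_m ⊗ₖ σ_n))) for m, n ∈ {1,2,3}, and let μ₁ ≥ μ₂ ≥ μ₃ be the eigenvalues of the symmetric matrix tᵀt. Then the supremum over unit vectors a, a', b, b' ∈ ℝ³ of Re(Tr(ρ · B(a,a',b,b'))) equals 2√(μ₁ + μ₂). In particular, ρ violates the CHSH inequality for some settings if and only if μ₁ + μ₂ > 1. -/

import Mathlib

open Matrix
open scoped Kronecker ComplexOrder

noncomputable def pauli1 : Matrix (Fin 2) (Fin 2) ℂ := !![0, 1; 1, 0]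
noncomputable def pauli2 : Matrix (Fin 2) (Fin 2) ℂ := !![0, -Complex.I; Complex.I, 0]
noncomputable def pauli3 : Matrix (Fin 2) (Fin 2) ℂ := !![1, 0; 0, -1]

/-- For `a ∈ ℝ³`, the matrix `a·σ = a₁σ₁ + a₂σ₂ + a₃σ₃`. -/
noncomputable def dotPauli (a : Fin 3 → ℝ) : Matrix (Fin 2) (Fin 2) ℂ :=
  (a 0 : ℂ) • pauli1 + (a 1 : ℂ) • pauli2 + (a 2 : ℂ) • pauli3

def IsUnitVec (a : Fin 3 → ℝ) : Prop := a 0 ^ 2 + a 1 ^ 2 + a 2 ^ 2 = 1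

/-- The CHSH operator `B(a,a',b,b') = (a·σ)⊗ₖ((b+b')·σ) + (a'·σ)⊗ₖ((b−b')·σ)`. -/
noncomputable def chshOperator (a a' b b' : Fin 3 → ℝ) :
    Matrix (Fin 2 × Fin 2) (Fin 2 × Fin 2) ℂ :=
  dotPauli a ⊗ₖ dotPauli (b + b') + dotPauli a' ⊗ₖ dotPauli (b - b')

def IsDensityMatrix {n : Type*} [Fintype n] [DecidableEq n] (ρ : Matrix n n ℂ) : Prop :=
  ρ.PosSemidef ∧ ρ.trace = 1

noncomputable def pauliVec : Fin 3 → Matrix (Fin 2) (Fin 2) ℂ := ![pauli1, pauli2, pauli3]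

/-- The correlation tensor `t m n = Re Tr(ρ (σₘ ⊗ σₙ))` of a two-qubit state. -/
noncomputable def corrTensor (ρ : Matrix (Fin 2 × Fin 2) (Fin 2 × Fin 2) ℂ) :
    Matrix (Fin 3) (Fin 3) ℝ :=
  fun m n => (Matrix.trace (ρ * (pauliVec m ⊗ₖ pauliVec n))).re

/-!
Writing `T` for the correlation matrix, the CHSH expectation is
`a ⬝ T (b + b') + a' ⬝ T (b - b')`. For unit `b, b'` the vectors `b + b'` and `b - b'` are
orthogonal with squared norms summing to `4`, so `b + b' = 2 cos θ c` and `b - b' = 2 sin θ c'`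
for an orthonormal pair `c, c'`. Optimising `a, a'` by Cauchy–Schwarz and then `θ` gives
`2 √(|T c|² + |T c'|²)`, and Ky Fan's principle bounds `|T c|² + |T c'|² = c ⬝ TᵀT c + c' ⬝ TᵀT c'`
by the sum `μ₁ + μ₂` of the two largest eigenvalues of `TᵀT`, with equality on the corresponding
eigenvectors.
-/

section RealVectors

variable {ι : Type*} [Fintype ι]

theorem dotProduct_self_nonneg (x : ι → ℝ) : 0 ≤ x ⬝ᵥ x :=
  Finset.sum_nonneg fun i _ => mul_self_nonneg (x i)

theorem dotProduct_le_sqrt_dotProduct_self {a : ι → ℝ} (ha : a ⬝ᵥ a = 1) (y : ι → ℝ) :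
    a ⬝ᵥ y ≤ √(y ⬝ᵥ y) := by
  have h := real_inner_le_norm (WithLp.toLp 2 y) (WithLp.toLp 2 a)
  rw [norm_eq_sqrt_real_inner, norm_eq_sqrt_real_inner (WithLp.toLp 2 a)] at h
  simpa only [EuclideanSpace.inner_toLp_toLp, star_trivial, ha, Real.sqrt_one, mul_one] using h

theorem exists_dotProduct_eq_sqrt_dotProduct_self {u : ι → ℝ} (hu : u ⬝ᵥ u = 1) (y : ι → ℝ) :
    ∃ a : ι → ℝ, a ⬝ᵥ a = 1 ∧ a ⬝ᵥ y = √(y ⬝ᵥ y) := by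
  by_cases hy : y = 0
  · exact ⟨u, hu, by simp [hy]⟩
  have hpos : 0 < y ⬝ᵥ y := by simpa using dotProduct_self_star_pos_iff.mpr hy
  refine ⟨(√(y ⬝ᵥ y))⁻¹ • y, ?_, ?_⟩
  · rw [smul_dotProduct, dotProduct_smul, smul_eq_mul, smul_eq_mul, ← mul_assoc,
      ← mul_inv, ← sq, Real.sq_sqrt hpos.le, inv_mul_cancel₀ hpos.ne']
  · rw [smul_dotProduct, smul_eq_mul, ← Real.sq_sqrt hpos.le, sq, ← mul_assoc,
      Real.sqrt_mul_self (Real.sqrt_nonneg _), inv_mul_cancel₀ (Real.sqrt_pos.mpr hpos).ne',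
      one_mul]

theorem sq_dotProduct_add_sq_dotProduct_le {c c' : ι → ℝ} (hcc' : c ⬝ᵥ c' = 0)
    (hc : c ⬝ᵥ c ≤ 1) (hc' : c' ⬝ᵥ c' ≤ 1) (v : ι → ℝ) :
    (v ⬝ᵥ c) ^ 2 + (v ⬝ᵥ c') ^ 2 ≤ v ⬝ᵥ v := by
  set p := v ⬝ᵥ c
  set q := v ⬝ᵥ c'
  have h : 0 ≤ (v - p • c - q • c') ⬝ᵥ (v - p • c - q • c') := dotProduct_self_nonneg _
  have hexp : (v - p • c - q • c') ⬝ᵥ (v - p • c - q • c')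
      = v ⬝ᵥ v - 2 * p ^ 2 - 2 * q ^ 2 + p ^ 2 * (c ⬝ᵥ c) + q ^ 2 * (c' ⬝ᵥ c') := by
    simp only [sub_dotProduct, dotProduct_sub, smul_dotProduct, dotProduct_smul, smul_eq_mul,
      dotProduct_comm c v, dotProduct_comm c' v, dotProduct_comm c' c, hcc']
    ring
  nlinarith [mul_le_mul_of_nonneg_left hc (sq_nonneg p),
    mul_le_mul_of_nonneg_left hc' (sq_nonneg q)]

theorem sqrt_dotProduct_self_smul {r : ℝ} (hr : 0 ≤ r) (x : ι → ℝ) :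
    √((r • x) ⬝ᵥ (r • x)) = r * √(x ⬝ᵥ x) := by
  rw [smul_dotProduct, dotProduct_smul, smul_eq_mul, smul_eq_mul, ← mul_assoc,
    Real.sqrt_mul (mul_self_nonneg r), Real.sqrt_mul_self hr]

theorem sqrt_dotProduct_self_smul_inv_smul (s : ι → ℝ) :
    √(s ⬝ᵥ s) • (√(s ⬝ᵥ s))⁻¹ • s = s := by
  by_cases hs : s = 0
  · simp [hs]
  have hpos : 0 < √(s ⬝ᵥ s) :=
    Real.sqrt_pos.mpr (by simpa using dotProduct_self_star_pos_iff.mpr hs)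
  rw [smul_smul, mul_inv_cancel₀ hpos.ne', one_smul]

/-- Normalising with `0⁻¹ = 0` gives a vector of norm `1`, or `0` when `s = 0`. -/
theorem inv_sqrt_smul_dotProduct_self_le_one (s : ι → ℝ) :
    ((√(s ⬝ᵥ s))⁻¹ • s) ⬝ᵥ ((√(s ⬝ᵥ s))⁻¹ • s) ≤ 1 := by
  have hs := dotProduct_self_nonneg s
  rw [smul_dotProduct, dotProduct_smul, smul_eq_mul, smul_eq_mul, ← mul_assoc, ← mul_inv,
    Real.mul_self_sqrt hs]
  exact inv_mul_le_one_of_le₀ le_rfl hs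

end RealVectors

theorem exists_sq_add_sq_eq_one_and_mul_sqrt_add_mul_sqrt_eq {x y : ℝ} (hx : 0 ≤ x)
    (hy : 0 ≤ y) : ∃ p q : ℝ, p ^ 2 + q ^ 2 = 1 ∧ p * √x + q * √y = √(x + y) := by
  by_cases hxy : x + y = 0
  · refine ⟨1, 0, by norm_num, ?_⟩
    rw [hxy, show x = 0 by linarith]
    simp
  have hpos : 0 < √(x + y) := Real.sqrt_pos.mpr (by positivity)
  refine ⟨√x / √(x + y), √y / √(x + y), ?_, ?_⟩
  · rw [div_pow, div_pow, Real.sq_sqrt hx, Real.sq_sqrt hy, Real.sq_sqrt (by positivity),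
      ← add_div, div_self hxy]
  · rw [div_mul_eq_mul_div, div_mul_eq_mul_div, Real.mul_self_sqrt hx, Real.mul_self_sqrt hy,
      ← add_div, div_eq_iff hpos.ne', Real.mul_self_sqrt (by positivity)]

theorem Antitone.sum_mul_le_add {n : ℕ} {μ : Fin (n + 2) → ℝ} (hμ : Antitone μ) (hμ₁ : 0 ≤ μ 1)
    {w : Fin (n + 2) → ℝ} (hw₀ : ∀ k, 0 ≤ w k) (hw₁ : ∀ k, w k ≤ 1) (hw : ∑ k, w k ≤ 2) :
    ∑ k, μ k * w k ≤ μ 0 + μ 1 := by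
  have htail : ∑ k : Fin (n + 1), (μ k.succ - μ 1) * w k.succ ≤ 0 :=
    Finset.sum_nonpos fun k _ => mul_nonpos_of_nonpos_of_nonneg
      (sub_nonpos.mpr (hμ (Fin.one_le_of_ne_zero (Fin.succ_ne_zero k)))) (hw₀ _)
  have hhead : (μ 0 - μ 1) * w 0 ≤ μ 0 - μ 1 :=
    mul_le_of_le_one_right (sub_nonneg.mpr (hμ (Fin.zero_le 1))) (hw₁ 0)
  calc ∑ k, μ k * w k = ∑ k, (μ k - μ 1) * w k + μ 1 * ∑ k, w k := by
        rw [Finset.mul_sum, ← Finset.sum_add_distrib]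
        exact Finset.sum_congr rfl fun k _ => by ring
    _ ≤ (μ 0 - μ 1) + μ 1 * 2 := by
        rw [Fin.sum_univ_succ]
        gcongr
        linarith
    _ = μ 0 + μ 1 := by ring

namespace Matrix

variable {ι : Type*} [Fintype ι] [DecidableEq ι]

namespace IsHermitian

variable {M : Matrix ι ι ℝ} (hM : M.IsHermitian)
include hM

theorem sum_eigenvectorBasis_dotProduct_mul (x y : ι → ℝ) :
    ∑ j, (⇑(hM.eigenvectorBasis j) ⬝ᵥ x) * (⇑(hM.eigenvectorBasis j) ⬝ᵥ y) = x ⬝ᵥ y := by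
  have h := hM.eigenvectorBasis.sum_inner_mul_inner (WithLp.toLp 2 x) (WithLp.toLp 2 y)
  simp only [EuclideanSpace.inner_eq_star_dotProduct, star_trivial] at h
  simpa [dotProduct_comm] using h

theorem eigenvectorBasis_dotProduct_eigenvectorBasis (j k : ι) :
    ⇑(hM.eigenvectorBasis j) ⬝ᵥ ⇑(hM.eigenvectorBasis k) = if j = k then 1 else 0 := by
  have h := hM.eigenvectorBasis.orthonormal
  rw [orthonormal_iff_ite] at h
  simpa [EuclideanSpace.inner_eq_star_dotProduct, dotProduct_comm] using h j k

theorem eigenvectorBasis_dotProduct_mulVec (j : ι) (x : ι → ℝ) :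
    ⇑(hM.eigenvectorBasis j) ⬝ᵥ (M *ᵥ x)
      = hM.eigenvalues j * (⇑(hM.eigenvectorBasis j) ⬝ᵥ x) := by
  rw [dotProduct_mulVec, ← mulVec_transpose, ← conjTranspose_eq_transpose_of_trivial, hM.eq,
    hM.mulVec_eigenvectorBasis, smul_dotProduct, smul_eq_mul]

theorem dotProduct_mulVec_eq_sum_eigenvalues (x : ι → ℝ) :
    x ⬝ᵥ (M *ᵥ x) = ∑ j, hM.eigenvalues j * (⇑(hM.eigenvectorBasis j) ⬝ᵥ x) ^ 2 := by
  rw [← hM.sum_eigenvectorBasis_dotProduct_mul]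
  simp only [hM.eigenvectorBasis_dotProduct_mulVec]
  exact Finset.sum_congr rfl fun j _ => by ring

end IsHermitian

namespace PosSemidef

variable {M : Matrix ι ι ℝ} (hM : M.PosSemidef)
include hM

theorem nonneg_of_eigenvalues_eq {κ : Type*} {μ : κ → ℝ} (e : ι ≃ κ)
    (he : ∀ i, hM.1.eigenvalues i = μ (e i)) (k : κ) : 0 ≤ μ k := by
  simpa [he] using hM.eigenvalues_nonneg (e.symm k)

/-- Ky Fan's maximum principle for two vectors. -/
theorem dotProduct_mulVec_add_dotProduct_mulVec_le {n : ℕ} {μ : Fin (n + 2) → ℝ}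
    (hμ : Antitone μ) (e : ι ≃ Fin (n + 2)) (he : ∀ i, hM.1.eigenvalues i = μ (e i))
    {c c' : ι → ℝ} (hcc' : c ⬝ᵥ c' = 0) (hc : c ⬝ᵥ c ≤ 1) (hc' : c' ⬝ᵥ c' ≤ 1) :
    c ⬝ᵥ (M *ᵥ c) + c' ⬝ᵥ (M *ᵥ c') ≤ μ 0 + μ 1 := by
  set w : ι → ℝ := fun j =>
    (⇑(hM.1.eigenvectorBasis j) ⬝ᵥ c) ^ 2 + (⇑(hM.1.eigenvectorBasis j) ⬝ᵥ c') ^ 2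
  have hsum : c ⬝ᵥ (M *ᵥ c) + c' ⬝ᵥ (M *ᵥ c') = ∑ k, μ k * w (e.symm k) := by
    rw [hM.1.dotProduct_mulVec_eq_sum_eigenvalues, hM.1.dotProduct_mulVec_eq_sum_eigenvalues,
      ← Finset.sum_add_distrib, ← e.symm.sum_comp]
    exact Finset.sum_congr rfl fun k _ => by simp only [he, Equiv.apply_symm_apply, w]; ring
  have hw : ∑ k, w (e.symm k) ≤ 2 := by
    rw [e.symm.sum_comp, Finset.sum_add_distrib]
    simp only [sq, hM.1.sum_eigenvectorBasis_dotProduct_mul]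
    linarith
  rw [hsum]
  refine hμ.sum_mul_le_add (hM.nonneg_of_eigenvalues_eq e he 1) (fun k => by positivity)
    (fun k => ?_) hw
  simpa only [w, hM.1.eigenvectorBasis_dotProduct_eigenvectorBasis, if_true] using
    sq_dotProduct_add_sq_dotProduct_le hcc' hc hc' (hM.1.eigenvectorBasis (e.symm k))

end PosSemidef

end Matrix

namespace Matrix

variable {κ ι : Type*} [Fintype κ] [Fintype ι]

theorem posSemidef_transpose_mul_self (T : Matrix κ ι ℝ) : (Tᵀ * T).PosSemidef := by
  simpa [conjTranspose_eq_transpose_of_trivial] using posSemidef_conjTranspose_mul_self T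

theorem dotProduct_transpose_mul_self_mulVec (T : Matrix κ ι ℝ) (x : ι → ℝ) :
    x ⬝ᵥ ((Tᵀ * T) *ᵥ x) = (T *ᵥ x) ⬝ᵥ (T *ᵥ x) := by
  rw [← mulVec_mulVec, dotProduct_mulVec, vecMul_transpose]

theorem mulVec_eigenvectorBasis_dotProduct_self [DecidableEq ι] {T : Matrix κ ι ℝ}
    (hT : (Tᵀ * T).IsHermitian) (j : ι) :
    (T *ᵥ ⇑(hT.eigenvectorBasis j)) ⬝ᵥ (T *ᵥ ⇑(hT.eigenvectorBasis j)) = hT.eigenvalues j := by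
  rw [← dotProduct_transpose_mul_self_mulVec, hT.mulVec_eigenvectorBasis, dotProduct_smul,
    hT.eigenvectorBasis_dotProduct_eigenvectorBasis, if_pos rfl, smul_eq_mul, mul_one]

end Matrix

def chshValue {ι : Type*} [Fintype ι] (T : Matrix ι ι ℝ) (a a' b b' : ι → ℝ) : ℝ :=
  a ⬝ᵥ (T *ᵥ (b + b')) + a' ⬝ᵥ (T *ᵥ (b - b'))

section CHSH

variable {ι : Type*} [Fintype ι] [DecidableEq ι] {T : Matrix ι ι ℝ} (hT : (Tᵀ * T).IsHermitian)
  {n : ℕ} {μ : Fin (n + 2) → ℝ} (hμ : Antitone μ) (e : ι ≃ Fin (n + 2))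
  (he : ∀ i, hT.eigenvalues i = μ (e i))
include he

include hμ in
theorem sqrt_add_sqrt_le_of_dotProduct_eq_zero {s d : ι → ℝ} (hsd : s ⬝ᵥ d = 0) :
    √((T *ᵥ s) ⬝ᵥ (T *ᵥ s)) + √((T *ᵥ d) ⬝ᵥ (T *ᵥ d))
      ≤ √((s ⬝ᵥ s + d ⬝ᵥ d) * (μ 0 + μ 1)) := by
  set α := √(s ⬝ᵥ s)
  set β := √(d ⬝ᵥ d)
  set c := α⁻¹ • s
  set c' := β⁻¹ • d
  have hKF : (T *ᵥ c) ⬝ᵥ (T *ᵥ c) + (T *ᵥ c') ⬝ᵥ (T *ᵥ c') ≤ μ 0 + μ 1 := by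
    simpa only [dotProduct_transpose_mul_self_mulVec] using
      (posSemidef_transpose_mul_self T).dotProduct_mulVec_add_dotProduct_mulVec_le hμ e he
        (by simp [hsd]) (inv_sqrt_smul_dotProduct_self_le_one s)
        (inv_sqrt_smul_dotProduct_self_le_one d)
  set X := √((T *ᵥ c) ⬝ᵥ (T *ᵥ c))
  set Y := √((T *ᵥ c') ⬝ᵥ (T *ᵥ c'))
  have hX : √((T *ᵥ s) ⬝ᵥ (T *ᵥ s)) = α * X := by
    rw [← sqrt_dotProduct_self_smul_inv_smul s, mulVec_smul,
      sqrt_dotProduct_self_smul (Real.sqrt_nonneg _)]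
  have hY : √((T *ᵥ d) ⬝ᵥ (T *ᵥ d)) = β * Y := by
    rw [← sqrt_dotProduct_self_smul_inv_smul d, mulVec_smul,
      sqrt_dotProduct_self_smul (Real.sqrt_nonneg _)]
  have hXY : X ^ 2 + Y ^ 2 ≤ μ 0 + μ 1 := by
    rwa [Real.sq_sqrt (dotProduct_self_nonneg _), Real.sq_sqrt (dotProduct_self_nonneg _)]
  rw [hX, hY]
  calc α * X + β * Y ≤ √((α ^ 2 + β ^ 2) * (X ^ 2 + Y ^ 2)) :=
        Real.le_sqrt_of_sq_le (by nlinarith [sq_nonneg (α * Y - β * X)])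
    _ ≤ √((s ⬝ᵥ s + d ⬝ᵥ d) * (μ 0 + μ 1)) := by
        rw [Real.sq_sqrt (dotProduct_self_nonneg s), Real.sq_sqrt (dotProduct_self_nonneg d)]
        exact Real.sqrt_le_sqrt (mul_le_mul_of_nonneg_left hXY
          (add_nonneg (dotProduct_self_nonneg s) (dotProduct_self_nonneg d)))

include hμ in
theorem chshValue_le {a a' b b' : ι → ℝ} (ha : a ⬝ᵥ a = 1) (ha' : a' ⬝ᵥ a' = 1)
    (hb : b ⬝ᵥ b = 1) (hb' : b' ⬝ᵥ b' = 1) :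
    chshValue T a a' b b' ≤ 2 * √(μ 0 + μ 1) := by
  have horth : (b + b') ⬝ᵥ (b - b') = 0 := by
    simp only [add_dotProduct, dotProduct_sub, dotProduct_comm b' b, hb, hb']
    ring
  have hnorm : (b + b') ⬝ᵥ (b + b') + (b - b') ⬝ᵥ (b - b') = 2 ^ 2 := by
    simp only [add_dotProduct, dotProduct_add, sub_dotProduct, dotProduct_sub,
      dotProduct_comm b' b, hb, hb']
    ring
  calc chshValue T a a' b b'
      ≤ √((T *ᵥ (b + b')) ⬝ᵥ (T *ᵥ (b + b'))) + √((T *ᵥ (b - b')) ⬝ᵥ (T *ᵥ (b - b'))) :=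
        add_le_add (dotProduct_le_sqrt_dotProduct_self ha _)
          (dotProduct_le_sqrt_dotProduct_self ha' _)
    _ ≤ √(2 ^ 2 * (μ 0 + μ 1)) := hnorm ▸ sqrt_add_sqrt_le_of_dotProduct_eq_zero hT hμ e he horth
    _ = 2 * √(μ 0 + μ 1) := by rw [Real.sqrt_mul (sq_nonneg 2), Real.sqrt_sq zero_le_two]

theorem exists_chshValue_eq : ∃ a a' b b' : ι → ℝ, a ⬝ᵥ a = 1 ∧ a' ⬝ᵥ a' = 1 ∧ b ⬝ᵥ b = 1 ∧
    b' ⬝ᵥ b' = 1 ∧ chshValue T a a' b b' = 2 * √(μ 0 + μ 1) := by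
  set u₀ := ⇑(hT.eigenvectorBasis (e.symm 0))
  set u₁ := ⇑(hT.eigenvectorBasis (e.symm 1))
  have hu₀ : u₀ ⬝ᵥ u₀ = 1 := by simp [u₀, hT.eigenvectorBasis_dotProduct_eigenvectorBasis]
  have hu₁ : u₁ ⬝ᵥ u₁ = 1 := by simp [u₁, hT.eigenvectorBasis_dotProduct_eigenvectorBasis]
  have hu₀₁ : u₀ ⬝ᵥ u₁ = 0 := by simp [u₀, u₁, hT.eigenvectorBasis_dotProduct_eigenvectorBasis]
  have hTu₀ : (T *ᵥ u₀) ⬝ᵥ (T *ᵥ u₀) = μ 0 := by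
    rw [mulVec_eigenvectorBasis_dotProduct_self, he, e.apply_symm_apply]
  have hTu₁ : (T *ᵥ u₁) ⬝ᵥ (T *ᵥ u₁) = μ 1 := by
    rw [mulVec_eigenvectorBasis_dotProduct_self, he, e.apply_symm_apply]
  obtain ⟨a, ha, hau₀⟩ := exists_dotProduct_eq_sqrt_dotProduct_self hu₀ (T *ᵥ u₀)
  obtain ⟨a', ha', hau₁⟩ := exists_dotProduct_eq_sqrt_dotProduct_self hu₀ (T *ᵥ u₁)
  have hμ_nonneg := (posSemidef_transpose_mul_self T).nonneg_of_eigenvalues_eq e he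
  obtain ⟨p, q, hpq, hpqμ⟩ :=
    exists_sq_add_sq_eq_one_and_mul_sqrt_add_mul_sqrt_eq (hμ_nonneg 0) (hμ_nonneg 1)
  refine ⟨a, a', p • u₀ + q • u₁, p • u₀ - q • u₁, ha, ha', ?_, ?_, ?_⟩
  · simp only [add_dotProduct, dotProduct_add, smul_dotProduct, dotProduct_smul, smul_eq_mul,
      dotProduct_comm u₁ u₀, hu₀, hu₁, hu₀₁]
    linear_combination hpq
  · simp only [sub_dotProduct, dotProduct_sub, smul_dotProduct, dotProduct_smul, smul_eq_mul,
      dotProduct_comm u₁ u₀, hu₀, hu₁, hu₀₁]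
    linear_combination hpq
  · have hsum : p • u₀ + q • u₁ + (p • u₀ - q • u₁) = (2 * p) • u₀ := by module
    have hdiff : p • u₀ + q • u₁ - (p • u₀ - q • u₁) = (2 * q) • u₁ := by module
    rw [chshValue, hsum, hdiff, mulVec_smul, mulVec_smul, dotProduct_smul, dotProduct_smul,
      smul_eq_mul, smul_eq_mul, hau₀, hau₁, hTu₀, hTu₁]
    linear_combination 2 * hpqμ

include hμ in
theorem isGreatest_chshValue :
    IsGreatest {x | ∃ a a' b b' : ι → ℝ, a ⬝ᵥ a = 1 ∧ a' ⬝ᵥ a' = 1 ∧ b ⬝ᵥ b = 1 ∧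
      b' ⬝ᵥ b' = 1 ∧ x = chshValue T a a' b b'} (2 * √(μ 0 + μ 1)) := by
  refine ⟨?_, ?_⟩
  · obtain ⟨a, a', b, b', ha, ha', hb, hb', h⟩ := exists_chshValue_eq hT e he
    exact ⟨a, a', b, b', ha, ha', hb, hb', h.symm⟩
  · rintro _ ⟨a, a', b, b', ha, ha', hb, hb', rfl⟩
    exact chshValue_le hT hμ e he ha ha' hb hb'

end CHSH

theorem isUnitVec_iff_dotProduct_self (a : Fin 3 → ℝ) : IsUnitVec a ↔ a ⬝ᵥ a = 1 := by
  simp only [IsUnitVec, dotProduct, Fin.sum_univ_three, sq]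

theorem re_trace_mul_kronecker_dotPauli (ρ : Matrix (Fin 2 × Fin 2) (Fin 2 × Fin 2) ℂ)
    (x y : Fin 3 → ℝ) :
    (ρ * (dotPauli x ⊗ₖ dotPauli y)).trace.re = x ⬝ᵥ (corrTensor ρ *ᵥ y) := by
  simp only [dotPauli, corrTensor, pauliVec, add_kronecker, kronecker_add, smul_kronecker,
    kronecker_smul, Matrix.mul_add, Matrix.mul_smul, trace_add, trace_smul,
    Complex.add_re, smul_eq_mul, Complex.re_ofReal_mul, dotProduct, mulVec, Fin.sum_univ_three,
    cons_val_zero, cons_val_one, cons_val]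
  ring

theorem re_trace_mul_chshOperator (ρ : Matrix (Fin 2 × Fin 2) (Fin 2 × Fin 2) ℂ)
    (a a' b b' : Fin 3 → ℝ) :
    (ρ * chshOperator a a' b b').trace.re = chshValue (corrTensor ρ) a a' b b' := by
  rw [chshOperator, Matrix.mul_add, trace_add, Complex.add_re, re_trace_mul_kronecker_dotPauli,
    re_trace_mul_kronecker_dotPauli, chshValue]

theorem horodecki_chsh_criterion (ρ : Matrix (Fin 2 × Fin 2) (Fin 2 × Fin 2) ℂ)
    (hsym : ((corrTensor ρ)ᵀ * corrTensor ρ).IsHermitian)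
    (μ : Fin 3 → ℝ) (hμ : Antitone μ)
    (heig : ∃ e : Fin 3 ≃ Fin 3, ∀ i, hsym.eigenvalues i = μ (e i)) :
    IsLUB {x : ℝ | ∃ a a' b b' : Fin 3 → ℝ,
        IsUnitVec a ∧ IsUnitVec a' ∧ IsUnitVec b ∧ IsUnitVec b' ∧
        x = (Matrix.trace (ρ * chshOperator a a' b b')).re}
      (2 * Real.sqrt (μ 0 + μ 1)) ∧
    ((∃ a a' b b' : Fin 3 → ℝ,
        IsUnitVec a ∧ IsUnitVec a' ∧ IsUnitVec b ∧ IsUnitVec b' ∧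
        2 < (Matrix.trace (ρ * chshOperator a a' b b')).re) ↔ 1 < μ 0 + μ 1) := by
  obtain ⟨e, he⟩ := heig
  simp only [isUnitVec_iff_dotProduct_self, re_trace_mul_chshOperator]
  have hlub := (isGreatest_chshValue hsym hμ e he).isLUB
  refine ⟨hlub, ?_⟩
  calc _ ↔ 2 < 2 * √(μ 0 + μ 1) := by
        rw [lt_isLUB_iff hlub]
        simp [and_assoc]
    _ ↔ √1 < √(μ 0 + μ 1) := by
        rw [Real.sqrt_one]
        constructor <;> intro h <;> linarith
    _ ↔ 1 < μ 0 + μ 1 := Real.sqrt_lt_sqrt_iff zero_le_one
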